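/- arXiv:1712.01416 — 3 statements merged into one kernel-verified Lean document; each statement's English description precedes it below -/
import Mathlib

section
/- Let X ⊂ C \ {0} be a finite set of nonzero complex numbers. Then there exists a positive integer k such that Re(α^k) > 0 for every α ∈ X. -/
/-!
Write `α = ‖α‖ · e^{i arg α}`; the sign of `Re (α ^ k)` is that of `Re (e^{i k arg α})`.
The arguments form one element `u` of the compact group `X → Circle`, and in a compact group
the identity is a cluster point of the powers of any element, so some positive power `u ^ k`
lies in the neighbourhood of `1` where every coordinate has positive real part.
-/

open Filter Topology

theorem exists_pos_pow_mem_of_mem_nhds_one {G : Type*} [Group G] [TopologicalSpace G]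
    [CompactSpace G] [IsTopologicalGroup G] (x : G) {U : Set G} (hU : U ∈ 𝓝 1) :
    ∃ n : ℕ, 0 < n ∧ x ^ n ∈ U :=
  ((mapClusterPt_one_atTop_pow x).frequently hU).forall_exists_of_atTop 1

theorem Circle.exists_pos_pow_forall_re_pos {ι : Type*} [Finite ι] (u : ι → Circle) :
    ∃ k : ℕ, 0 < k ∧ ∀ i, 0 < ((u i ^ k : Circle) : ℂ).re := by
  have hU : {z : ι → Circle | ∀ i, 0 < (z i : ℂ).re} ∈ 𝓝 1 := by
    refine eventually_all.2 fun i => ?_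
    have hcont : Continuous fun z : ι → Circle => (z i : ℂ).re :=
      Complex.continuous_re.comp (continuous_subtype_val.comp (continuous_apply i))
    exact hcont.continuousAt.eventually (lt_mem_nhds (by simp))
  exact exists_pos_pow_mem_of_mem_nhds_one u hU

theorem Complex.re_pow_eq_norm_pow_mul_re_exp_arg_pow (α : ℂ) (k : ℕ) :
    (α ^ k).re = ‖α‖ ^ k * ((Circle.exp α.arg ^ k : Circle) : ℂ).re := by
  conv_lhs => rw [← Complex.norm_mul_exp_arg_mul_I α]
  rw [Circle.coe_pow, Circle.coe_exp, mul_pow, ← Complex.ofReal_pow, Complex.re_ofReal_mul]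

/-- For a finite set `X` of nonzero complex numbers, there is a positive integer `k` with
`Re(α^k) > 0` for every `α ∈ X`. -/
theorem stmt10 (X : Finset ℂ) (hX : (0 : ℂ) ∉ X) :
    ∃ k : ℕ, 0 < k ∧ ∀ α ∈ X, 0 < (α ^ k).re := by
  obtain ⟨k, hk, hre⟩ := Circle.exists_pos_pow_forall_re_pos fun α : X => Circle.exp (α : ℂ).arg
  refine ⟨k, hk, fun α hα => ?_⟩
  have hnorm : 0 < ‖α‖ := norm_pos_iff.2 fun h => hX (h ▸ hα)
  rw [Complex.re_pow_eq_norm_pow_mul_re_exp_arg_pow]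
  exact mul_pos (pow_pos hnorm k) (hre ⟨α, hα⟩)
end

section
/- Let A ∈ M_m(C[Z^r]) be non-nilpotent (i.e., A^k ≠ 0 for all k, equivalently trace(A^k) ≠ 0 in C[Z^r] for some k). Then there exists N > 0 such that for all integers j > N, the quantity t_k(jZ^r) — the sum of coefficients of trace(A^k) supported on the sublattice jZ^r — is nonzero for infinitely many values of k. -/
/-!
Specialising `A` at the `j`-torsion points `ξ` of the torus `(S¹)ʳ` gives complex matrices
`A(ξ)`, and by orthogonality of characters `jʳ · t_k(jℤʳ) = ∑_ξ trace (A(ξ)ᵏ)`, the trace of the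
`k`-th power of the block-diagonal matrix `D = diag (A(ξ))`. If `t_k(jℤʳ)` vanished for all large
`k`, the power sums of the eigenvalues of `D` would eventually vanish, so (Vandermonde) `D` and
every `A(ξ)` would be nilpotent, forcing `ξ(trace (A^k₀)) = 0` for all `ξ`. Once `j` exceeds the
spread of the support of `trace (A^k₀) ≠ 0`, reduction mod `j` is injective on that support, and
finite Fourier inversion then gives `trace (A^k₀) = 0`, a contradiction.
-/

open Filter Module

lemma eq_zero_of_eventually_sum_mul_pow_eq_zero {R : Type*} [CommRing R] [IsDomain R]
    {s : Finset R} {d : R → R} (h : ∀ᶠ k in atTop, ∑ μ ∈ s, d μ * μ ^ k = 0)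
    {μ : R} (hμs : μ ∈ s) (hμ : μ ≠ 0) : d μ = 0 := by
  obtain ⟨k₀, hk₀⟩ := eventually_atTop.1 h
  let e := s.equivFin
  have hvanish := Matrix.eq_zero_of_forall_pow_sum_mul_pow_eq_zero
    (f := fun i => (e.symm i : R)) (v := fun i => d (e.symm i) * (e.symm i : R) ^ k₀)
    (Subtype.val_injective.comp e.symm.injective) fun i => by
      rw [← hk₀ (k₀ + i) le_self_add, ← s.sum_coe_sort, ← e.symm.sum_comp]
      simp only [pow_add, mul_assoc]
  have hμ' := congrFun hvanish (e ⟨μ, hμs⟩)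
  simp only [Equiv.symm_apply_apply, Pi.zero_apply, mul_eq_zero] at hμ'
  exact hμ'.resolve_right (pow_ne_zero _ hμ)

namespace Module.End

variable {K V : Type*} [Field K] [AddCommGroup V] [Module K V] [FiniteDimensional K V]

lemma trace_restrict_maxGenEigenspace_pow (f : End K V) (μ : K) (k : ℕ) :
    LinearMap.trace K (f.maxGenEigenspace μ)
        ((f.restrict (f.mapsTo_maxGenEigenspace_of_comm rfl μ)) ^ k)
      = finrank K (f.maxGenEigenspace μ) * μ ^ k := by
  set g := f.restrict (f.mapsTo_maxGenEigenspace_of_comm rfl μ)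
  have hnil : IsNilpotent (g - algebraMap K _ μ) := by
    convert f.isNilpotent_restrict_maxGenEigenspace_sub_algebraMap μ using 1
    ext
    rfl
  induction k with
  | zero => simp
  | succ k ih =>
    rw [pow_succ, mul_eq_comp,
      LinearMap.trace_comp_eq_mul_of_commute_of_isNilpotent μ ((Commute.refl g).pow_left k) hnil,
      ih]
    ring

lemma finite_maxGenEigenspace_ne_bot (f : End K V) : {μ | f.maxGenEigenspace μ ≠ ⊥}.Finite :=
  WellFoundedGT.finite_ne_bot_of_iSupIndep f.independent_maxGenEigenspace

noncomputable def eigenvalueFinset (f : End K V) : Finset K :=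
  f.finite_maxGenEigenspace_ne_bot.toFinset

lemma mem_eigenvalueFinset {f : End K V} {μ : K} :
    μ ∈ f.eigenvalueFinset ↔ f.maxGenEigenspace μ ≠ ⊥ :=
  Set.Finite.mem_toFinset _

lemma trace_pow_eq_sum_eigenvalueFinset [IsAlgClosed K] (f : End K V) (k : ℕ) :
    LinearMap.trace K V (f ^ k)
      = ∑ μ ∈ f.eigenvalueFinset, finrank K (f.maxGenEigenspace μ) * μ ^ k := by
  classical
  have hmaps (μ : K) : Set.MapsTo (f ^ k) (f.maxGenEigenspace μ) (f.maxGenEigenspace μ) :=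
    f.mapsTo_maxGenEigenspace_of_comm (Commute.pow_right rfl k) μ
  rw [LinearMap.trace_eq_sum_trace_restrict'
    (DirectSum.isInternal_submodule_of_iSupIndep_of_iSup_eq_top
      f.independent_maxGenEigenspace f.iSup_maxGenEigenspace_eq_top)
    f.finite_maxGenEigenspace_ne_bot hmaps]
  refine Finset.sum_congr rfl fun μ _ => ?_
  rw [← pow_restrict k (f.mapsTo_maxGenEigenspace_of_comm rfl μ),
    trace_restrict_maxGenEigenspace_pow]

theorem isNilpotent_of_eventually_trace_pow_eq_zero [IsAlgClosed K] [CharZero K] (f : End K V)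
    (h : ∀ᶠ k in atTop, LinearMap.trace K V (f ^ k) = 0) : IsNilpotent f := by
  have hbot (μ : K) (hμ : μ ≠ 0) : f.maxGenEigenspace μ = ⊥ := by
    by_contra hne
    have hdim := eq_zero_of_eventually_sum_mul_pow_eq_zero
      (by simpa only [trace_pow_eq_sum_eigenvalueFinset] using h) (mem_eigenvalueFinset.2 hne) hμ
    exact hne (Submodule.finrank_eq_zero.1 (by exact_mod_cast hdim))
  have htop : f.maxGenEigenspace 0 = ⊤ := by
    refine top_unique (f.iSup_maxGenEigenspace_eq_top ▸ iSup_le fun μ => ?_)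
    rcases eq_or_ne μ 0 with rfl | hμ
    · exact le_rfl
    · simp [hbot μ hμ]
  refine ((LinearMap.charpoly_nilpotent_tfae f).out 0 2).2 fun v => ?_
  simpa using (f.mem_maxGenEigenspace 0 v).1 (htop ▸ Submodule.mem_top)

end Module.End

namespace Matrix

variable {K n : Type*} [Field K] [IsAlgClosed K] [CharZero K] [Fintype n] [DecidableEq n]

theorem isNilpotent_of_eventually_trace_pow_eq_zero {M : Matrix n n K}
    (h : ∀ᶠ k in atTop, (M ^ k).trace = 0) : IsNilpotent M := by
  have hnil := Module.End.isNilpotent_of_eventually_trace_pow_eq_zero (toLinAlgEquiv' M)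
    (h.mono fun k hk => by rw [← map_pow]; exact (trace_toLin'_eq _).trans hk)
  simpa using hnil.map (toLinAlgEquiv' (R := K) (n := n)).symm

theorem trace_pow_eq_zero_of_eventually_sum_trace_pow_eq_zero {R ι : Type*} [CommRing R]
    [Fintype ι] (φ : ι → R →+* K) (A : Matrix n n R)
    (h : ∀ᶠ k in atTop, ∑ i, φ i (A ^ k).trace = 0) (i : ι) {k : ℕ} (hk : k ≠ 0) :
    φ i (A ^ k).trace = 0 := by
  classical
  have htrace (k : ℕ) (i : ι) : φ i (A ^ k).trace = ((φ i).mapMatrix A ^ k).trace := by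
    rw [← map_pow, AddMonoidHom.map_trace]
    rfl
  obtain ⟨l, hl⟩ := isNilpotent_of_eventually_trace_pow_eq_zero
    (M := blockDiagonal fun i => (φ i).mapMatrix A)
    (by simpa only [← blockDiagonal_pow, trace_blockDiagonal, Pi.pow_apply, htrace] using h)
  have hblock : IsNilpotent ((φ i).mapMatrix A) :=
    ⟨l, congrFun (blockDiagonal_injective ((blockDiagonal_pow _ _).trans
      (hl.trans blockDiagonal_zero.symm))) i⟩
  rw [htrace]
  exact (isNilpotent_trace_of_isNilpotent (hblock.pow_of_pos hk)).eq_zero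

end Matrix

namespace AddMonoidAlgebra

variable {M G : Type*} [AddCommGroup M] [AddCommGroup G]

/-- For `M = ℤʳ`, characters of `M` are points of the torus `(ℂˣ)ʳ`, and this is the
specialisation of a Laurent polynomial at such a point. -/
noncomputable def evalAddChar (ψ : AddChar M ℂ) : AddMonoidAlgebra ℂ M →ₐ[ℂ] ℂ :=
  lift ℂ ℂ M ψ.toMonoidHom

lemma evalAddChar_apply (ψ : AddChar M ℂ) (x : AddMonoidAlgebra ℂ M) :
    evalAddChar ψ x = ∑ h ∈ x.coeff.support, x.coeff h * ψ h := by
  simp [evalAddChar, lift_apply, Finsupp.sum]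

lemma sum_addChar_mul_evalAddChar_compAddMonoidHom [Fintype G] [DecidableEq G] (π : M →+ G)
    (x : AddMonoidAlgebra ℂ M) (a : M) :
    ∑ ψ : AddChar G ℂ, ψ (-π a) * evalAddChar (ψ.compAddMonoidHom π) x
      = Fintype.card G * ∑ h ∈ x.coeff.support with π h = π a, x.coeff h := by
  simp only [evalAddChar_apply, Finset.mul_sum, AddChar.compAddMonoidHom_apply]
  rw [Finset.sum_comm, Finset.sum_filter]
  refine Finset.sum_congr rfl fun h _ => ?_
  simp_rw [mul_left_comm _ (x.coeff h), ← AddChar.map_add_eq_mul, ← Finset.mul_sum,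
    AddChar.sum_apply_eq_ite, neg_add_eq_zero, eq_comm (a := π a)]
  split_ifs <;> ring

lemma sum_evalAddChar_compAddMonoidHom [Fintype G] [DecidableEq G] (π : M →+ G) (x : AddMonoidAlgebra ℂ M) :
    ∑ ψ : AddChar G ℂ, evalAddChar (ψ.compAddMonoidHom π) x
      = Fintype.card G * ∑ h ∈ x.coeff.support with π h = 0, x.coeff h := by
  simpa using sum_addChar_mul_evalAddChar_compAddMonoidHom π x 0

lemma eq_zero_of_forall_evalAddChar_compAddMonoidHom_eq_zero [Finite G] (π : M →+ G)
    {x : AddMonoidAlgebra ℂ M} (hπ : Set.InjOn π x.coeff.support)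
    (h : ∀ ψ : AddChar G ℂ, evalAddChar (ψ.compAddMonoidHom π) x = 0) : x = 0 := by
  classical
  cases nonempty_fintype G
  rw [← coeff_eq_zero, ← Finsupp.support_eq_empty, Finset.eq_empty_iff_forall_notMem]
  intro a ha
  have hsum := sum_addChar_mul_evalAddChar_compAddMonoidHom π x a
  have hfilter : {h ∈ x.coeff.support | π h = π a} = {a} :=
    Finset.eq_singleton_iff_unique_mem.2 ⟨Finset.mem_filter.2 ⟨ha, rfl⟩,
      fun b hb => hπ (Finset.mem_filter.1 hb).1 ha (Finset.mem_filter.1 hb).2⟩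
  simp only [h, mul_zero, Finset.sum_const_zero, hfilter, Finset.sum_singleton] at hsum
  exact Finsupp.mem_support_iff.1 ha
    ((mul_eq_zero.1 hsum.symm).resolve_left (Nat.cast_ne_zero.2 Fintype.card_ne_zero))

end AddMonoidAlgebra

lemma intCast_compLeft_eq_zero_iff {ι : Type*} {j : ℕ} {h : ι → ℤ} :
    (Int.castAddHom (ZMod j)).compLeft ι h = 0 ↔ ∀ i, (j : ℤ) ∣ h i := by
  simp [funext_iff, ZMod.intCast_zmod_eq_zero_iff_dvd]

lemma eventually_injOn_intCast_compLeft {ι : Type*} (S : Finset (ι → ℤ)) :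
    ∀ᶠ j : ℕ in atTop, Set.InjOn ((Int.castAddHom (ZMod j)).compLeft ι) S := by
  have hpair (a b : ι → ℤ) : ∀ᶠ j : ℕ in atTop,
      (Int.castAddHom (ZMod j)).compLeft ι a = (Int.castAddHom (ZMod j)).compLeft ι b →
        a = b := by
    by_cases hab : a = b
    · exact Eventually.of_forall fun _ _ => hab
    obtain ⟨i, hi⟩ := Function.ne_iff.1 hab
    filter_upwards [eventually_gt_atTop (b i - a i).natAbs] with j hj hmod
    have hdvd : (j : ℤ) ∣ b i - a i :=
      (ZMod.intCast_eq_intCast_iff_dvd_sub _ _ _).1 (congrFun hmod i)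
    exact absurd (Int.eq_zero_of_dvd_of_natAbs_lt_natAbs hdvd hj) (sub_ne_zero.2 hi.symm)
  filter_upwards [(eventually_all_finset S).2 fun a _ => (eventually_all_finset S).2 fun b _ =>
    hpair a b] with j hj a ha b hb
  exact hj a ha b hb

open AddMonoidAlgebra in
open scoped Classical in
/-- If `A ∈ M_m(ℂ[ℤ^r])` is not nilpotent (some `trace(A^k) ≠ 0`), then there is `N` such that
for every `j > N`, the sum of the coefficients of `trace(A^k)` supported on the sublattice
`jℤ^r` is nonzero for infinitely many `k`. -/
theorem stmt13 (m r : ℕ) (A : Matrix (Fin m) (Fin m) (AddMonoidAlgebra ℂ (Fin r → ℤ)))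
    (hA : ∃ k : ℕ, 1 ≤ k ∧ Matrix.trace (A ^ k) ≠ 0) :
    ∃ N : ℕ, ∀ j : ℕ, N < j →
      {k : ℕ | (∑ h ∈ (Matrix.trace (A ^ k)).coeff.support,
          if (∀ i, (j : ℤ) ∣ h i) then (Matrix.trace (A ^ k)).coeff h else 0) ≠ 0}.Infinite := by
  obtain ⟨k₀, hk₀, hT⟩ := hA
  obtain ⟨N, hN⟩ :=
    eventually_atTop.1 (eventually_injOn_intCast_compLeft (A ^ k₀).trace.coeff.support)
  refine ⟨N, fun j hj hfin => hT ?_⟩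
  have : NeZero j := ⟨by omega⟩
  set π := (Int.castAddHom (ZMod j)).compLeft (Fin r)
  have hsum (k : ℕ) :
      ∑ ψ : AddChar (Fin r → ZMod j) ℂ, evalAddChar (ψ.compAddMonoidHom π) (A ^ k).trace
        = j ^ r * ∑ h ∈ (A ^ k).trace.coeff.support,
            if (∀ i, (j : ℤ) ∣ h i) then (A ^ k).trace.coeff h else 0 := by
    simp [sum_evalAddChar_compAddMonoidHom, π, intCast_compLeft_eq_zero_iff, Finset.sum_filter]
  have hvanish : ∀ᶠ k in atTop, ∑ ψ : AddChar (Fin r → ZMod j) ℂ,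
      (evalAddChar (ψ.compAddMonoidHom π)).toRingHom (A ^ k).trace = 0 := by
    rw [← Nat.cofinite_eq_atTop]
    filter_upwards [hfin.eventually_cofinite_notMem] with k hk
    simp only [AlgHom.toRingHom_eq_coe, RingHom.coe_coe, hsum]
    exact mul_eq_zero_of_right _ (not_not.1 hk)
  exact eq_zero_of_forall_evalAddChar_compAddMonoidHom_eq_zero π (hN j hj.le) fun ψ =>
    Matrix.trace_pow_eq_zero_of_eventually_sum_trace_pow_eq_zero _ A hvanish ψ (by omega)
end

section
/- Let T be a finite directed graph and let t be a function from directed edges of T to an abelian group H, extended additively to directed paths. For a cycle γ (closed path up to cyclic rotation) of length k, set t_n(γ) = (1/k)·t(γ) ∈ H ⊗ R. Let ω: H ⊗ R → R be linear, let M_ω be the supremum of ω(t_n(γ)) over all cycles γ, assumed attained, and let T_ω be the union of all cycles γ with ω(t_n(γ)) = M_ω. Then every cycle contained in the subgraph T_ω satisfies ω(t_n(γ)) = M_ω. -/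
/-!
Put `w e = ω (t e) - M`. Every cycle has nonpositive `w`-weight and the maximizing cycles are
those of weight zero. Deleting an edge `e` from a maximizing cycle through it leaves a return walk
from the target of `e` to its source, of weight `-w e`. Following the return walks of the edges
of `c` in reverse order gives a closed walk of weight `-∑ w (c i)`, which is nonpositive; hence
`∑ w (c i) ≥ 0`, while `∑ w (c i) ≤ 0` holds because `c` is itself a cycle.
-/

lemma sum_div_succ_le_iff_sum_sub_nonpos {K : Type*} [Field K] [LinearOrder K]
    [IsStrictOrderedRing K] {n : ℕ} (x : Fin (n + 1) → K) (M : K) :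
    (∑ i, x i) / (n + 1) ≤ M ↔ ∑ i, (x i - M) ≤ 0 := by
  rw [Finset.sum_sub_distrib, div_le_iff₀ (by positivity), sub_nonpos]
  simp [mul_comm]

lemma sum_div_succ_eq_iff_sum_sub_eq_zero {K : Type*} [Field K] [LinearOrder K]
    [IsStrictOrderedRing K] {n : ℕ} (x : Fin (n + 1) → K) (M : K) :
    (∑ i, x i) / (n + 1) = M ↔ ∑ i, (x i - M) = 0 := by
  rw [Finset.sum_sub_distrib, div_eq_iff (by positivity), sub_eq_zero]
  simp [mul_comm]

lemma List.sum_map_flatMap {ι κ β : Type*} [AddMonoid β] (l : List ι) (D : ι → List κ)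
    (w : κ → β) : ((l.flatMap D).map w).sum = (l.map fun i => ((D i).map w).sum).sum := by
  rw [List.map_flatMap, List.flatMap_def, List.sum_flatten, List.map_map]
  rfl

namespace Multidigraph

variable {V E : Type*} (src tgt : E → V)

def IsWalk : List E → V → V → Prop
  | [], a, b => a = b
  | e :: l, a, b => src e = a ∧ IsWalk l (tgt e) b

def IsCycle {n : ℕ} (c : Fin (n + 1) → E) : Prop :=
  ∀ i, tgt (c i) = src (c (i + 1))

variable {src tgt}

@[simp]
lemma isWalk_nil {a b : V} : IsWalk src tgt [] a b ↔ a = b := Iff.rfl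

@[simp]
lemma isWalk_cons {e : E} {l : List E} {a b : V} :
    IsWalk src tgt (e :: l) a b ↔ src e = a ∧ IsWalk src tgt l (tgt e) b := Iff.rfl

lemma IsWalk.append {l l' : List E} {a b d : V}
    (h : IsWalk src tgt l a b) (h' : IsWalk src tgt l' b d) :
    IsWalk src tgt (l ++ l') a d := by
  induction l generalizing a with
  | nil => exact (isWalk_nil.mp h) ▸ h'
  | cons e l ih => exact ⟨h.1, ih h.2⟩

lemma isWalk_ofFn_iff {n : ℕ} {g : Fin (n + 1) → E} {a b : V} :
    IsWalk src tgt (List.ofFn g) a b ↔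
      src (g 0) = a ∧ (∀ i : Fin n, tgt (g i.castSucc) = src (g i.succ)) ∧
        tgt (g (Fin.last n)) = b := by
  induction n generalizing a with
  | zero => simp [List.ofFn_succ]
  | succ n ih =>
    rw [List.ofFn_succ, isWalk_cons, ih, Fin.forall_fin_succ]
    simp only [Fin.succ_last, Fin.castSucc_zero, Fin.succ_zero_eq_one, Fin.succ_castSucc,
      eq_comm (a := tgt (g 0))]
    tauto

lemma isCycle_iff_isWalk_ofFn {n : ℕ} {c : Fin (n + 1) → E} :
    IsCycle src tgt c ↔ IsWalk src tgt (List.ofFn c) (src (c 0)) (src (c 0)) := by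
  rw [isWalk_ofFn_iff, IsCycle, Fin.forall_fin_succ', Fin.last_add_one]
  simp only [Fin.coeSucc_eq_succ, true_and]

lemma IsCycle.rotate {n : ℕ} {c : Fin (n + 1) → E} (hc : IsCycle src tgt c) (j : Fin (n + 1)) :
    IsCycle src tgt (fun i => c (j + i)) := fun i => by
  simpa only [add_assoc] using hc (j + i)

lemma IsCycle.exists_return_walk {α : Type*} [AddCommGroup α] (w : E → α) {n : ℕ}
    {c : Fin (n + 1) → E} (hc : IsCycle src tgt c) (j : Fin (n + 1)) :
    ∃ D : List E, IsWalk src tgt D (tgt (c j)) (src (c j)) ∧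
      (D.map w).sum = ∑ i, w (c i) - w (c j) := by
  have hrot := isCycle_iff_isWalk_ofFn.mp (hc.rotate j)
  simp only [add_zero, List.ofFn_succ (n := n), isWalk_cons] at hrot
  refine ⟨_, hrot.2, ?_⟩
  rw [eq_sub_iff_add_eq', ← Equiv.sum_comp (Equiv.addLeft j), Fin.sum_univ_succ]
  simp [List.map_ofFn, List.sum_ofFn]

lemma IsWalk.reverse_flatMap {l : List E} {a b : V} (hl : IsWalk src tgt l a b)
    {D : E → List E} (hD : ∀ e ∈ l, IsWalk src tgt (D e) (tgt e) (src e)) :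
    IsWalk src tgt (l.reverse.flatMap D) b a := by
  induction l generalizing a with
  | nil => exact (isWalk_nil.mp hl).symm
  | cons e l ih =>
    rw [List.reverse_cons, List.flatMap_append, List.flatMap_singleton, ← hl.1]
    exact (ih hl.2 fun f hf => hD f (List.mem_cons_of_mem e hf)).append
      (hD e List.mem_cons_self)

lemma IsWalk.sum_map_nonpos {α : Type*} [AddCommMonoid α] [Preorder α] {w : E → α}
    (hneg : ∀ (n : ℕ) (c : Fin (n + 1) → E), IsCycle src tgt c → ∑ i, w (c i) ≤ 0)
    {l : List E} {a : V} (hl : IsWalk src tgt l a a) : (l.map w).sum ≤ 0 := by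
  obtain ⟨n, g, rfl⟩ : ∃ n, ∃ g : Fin n → E, List.ofFn g = l := ⟨_, _, List.ofFn_get l⟩
  cases n with
  | zero => simp
  | succ n =>
    obtain rfl : src (g 0) = a := (isWalk_ofFn_iff.mp hl).1
    rw [List.map_ofFn, List.sum_ofFn]
    exact hneg n g (isCycle_iff_isWalk_ofFn.mpr hl)

theorem IsCycle.sum_eq_zero_of_forall_mem_zero_cycle {α : Type*} [AddCommGroup α]
    [PartialOrder α] [IsOrderedAddMonoid α] {w : E → α}
    (hneg : ∀ (n : ℕ) (c : Fin (n + 1) → E), IsCycle src tgt c → ∑ i, w (c i) ≤ 0)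
    {k : ℕ} {c : Fin (k + 1) → E} (hc : IsCycle src tgt c)
    (hedge : ∀ i, ∃ (K : ℕ) (γ : Fin (K + 1) → E),
      IsCycle src tgt γ ∧ ∑ i, w (γ i) = 0 ∧ c i ∈ Set.range γ) :
    ∑ i, w (c i) = 0 := by
  have hret : ∀ e ∈ List.ofFn c,
      ∃ D, IsWalk src tgt D (tgt e) (src e) ∧ (D.map w).sum = -w e := by
    intro e he
    obtain ⟨i, rfl⟩ := List.mem_ofFn.mp he
    obtain ⟨K, γ, hγ, hγsum, j, hj⟩ := hedge i
    obtain ⟨D, hD, hDsum⟩ := hγ.exists_return_walk w j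
    exact ⟨D, hj ▸ hD, by rw [hDsum, hγsum, hj, zero_sub]⟩
  choose! D hD hDsum using hret
  have hW := (isCycle_iff_isWalk_ofFn.mp hc).reverse_flatMap hD
  have hWsum : (((List.ofFn c).reverse.flatMap D).map w).sum = -∑ i, w (c i) := by
    rw [List.sum_map_flatMap, List.map_congr_left fun e he => hDsum e (List.mem_reverse.mp he),
      List.map_reverse, List.sum_reverse, List.map_ofFn, List.sum_ofFn, ← Finset.sum_neg_distrib]
    rfl
  refine le_antisymm (hneg k c hc) ?_
  rw [← neg_nonpos, ← hWsum]
  exact hW.sum_map_nonpos hneg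

end Multidigraph

theorem stmt14_general {V E H : Type*} [AddCommGroup H]
    (src tgt : E → V) (t : E → H) (ω : H →+ ℝ) (M : ℝ)
    (hub : ∀ (k : ℕ) (c : Fin (k + 1) → E),
      (∀ i, tgt (c i) = src (c (i + 1))) →
      ω (∑ i, t (c i)) / (k + 1 : ℝ) ≤ M)
    (k : ℕ) (c : Fin (k + 1) → E)
    (hc : ∀ i, tgt (c i) = src (c (i + 1)))
    (hedge : ∀ i : Fin (k + 1), ∃ (k' : ℕ) (c' : Fin (k' + 1) → E),
      (∀ i', tgt (c' i') = src (c' (i' + 1))) ∧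
      ω (∑ i', t (c' i')) / (k' + 1 : ℝ) = M ∧ c i ∈ Set.range c') :
    ω (∑ i, t (c i)) / (k + 1 : ℝ) = M := by
  rw [map_sum, sum_div_succ_eq_iff_sum_sub_eq_zero]
  refine Multidigraph.IsCycle.sum_eq_zero_of_forall_mem_zero_cycle (w := fun e => ω (t e) - M)
    (fun n g hg => ?_) hc fun i => ?_
  · rw [← sum_div_succ_le_iff_sum_sub_nonpos, ← map_sum]
    exact hub n g hg
  · obtain ⟨K, γ, hγ, hγmax, hmem⟩ := hedge i
    rw [map_sum, sum_div_succ_eq_iff_sum_sub_eq_zero] at hγmax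
    exact ⟨K, γ, hγ, hγmax, hmem⟩

/-- Extremal subgraph lemma: in a finite directed graph with an additive `H`-valued edge weight
`t` and a linear functional `ω` (given as an additive map `H → ℝ`), if `M` is the maximal value
of the normalized weight `ω(t(γ))/length(γ)` over all cycles `γ` (attained by some cycle), then
any cycle all of whose edges lie on maximizing cycles is itself maximizing. Cycles of length
`k+1` are encoded as `c : Fin (k+1) → E` with `tgt (c i) = src (c (i+1))` cyclically. -/
theorem stmt14 {V E H : Type*} [Fintype V] [Fintype E] [AddCommGroup H]
    (src tgt : E → V) (t : E → H) (ω : H →+ ℝ) (M : ℝ)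
    (hub : ∀ (k : ℕ) (c : Fin (k + 1) → E),
      (∀ i, tgt (c i) = src (c (i + 1))) →
      ω (∑ i, t (c i)) / (k + 1 : ℝ) ≤ M)
    (hatt : ∃ (k : ℕ) (c : Fin (k + 1) → E),
      (∀ i, tgt (c i) = src (c (i + 1))) ∧ ω (∑ i, t (c i)) / (k + 1 : ℝ) = M)
    (k : ℕ) (c : Fin (k + 1) → E)
    (hc : ∀ i, tgt (c i) = src (c (i + 1)))
    (hedge : ∀ i : Fin (k + 1), ∃ (k' : ℕ) (c' : Fin (k' + 1) → E),
      (∀ i', tgt (c' i') = src (c' (i' + 1))) ∧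
      ω (∑ i', t (c' i')) / (k' + 1 : ℝ) = M ∧ c i ∈ Set.range c') :
    ω (∑ i, t (c i)) / (k + 1 : ℝ) = M :=
  stmt14_general src tgt t ω M hub k c hc hedge
end
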